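/- Let κ be an uncountable cardinal. If for every cardinal λ ≥ κ every local club in [λ]^ω contains a club (i.e., the Weak Reflection Principle holds at all λ ≥ κ), then every projective stationary set S ⊆ [κ]^ω is spanning. -/

import Mathlib

open Set Cardinal

noncomputable section

/-- The first uncountable ordinal `ω₁`. -/
def omega1 : Ordinal.{0} := (Cardinal.aleph 1).ord

/-- `x ∩ ω₁` is a countable ordinal. -/
def GoodSet (x : Set Ordinal.{0}) : Prop :=
  ∃ δ < omega1, x ∩ Set.Iio omega1 = Set.Iio δ

/-- `δ_x`: the countable ordinal `x ∩ ω₁`. -/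
def delta (x : Set Ordinal.{0}) : Ordinal.{0} :=
  sInf {δ : Ordinal.{0} | x ∩ Set.Iio omega1 = Set.Iio δ}

/-- The space `[X]^ω` of countable subsets of `X` (restricted, as in the paper,
to those `x` whose intersection with `ω₁` is a countable ordinal). -/
def countPow (X : Set Ordinal.{0}) : Set (Set Ordinal.{0}) :=
  {x | x ⊆ X ∧ x.Countable ∧ GoodSet x}

/-- `C` is club in `[X]^ω`: it is cofinal and closed under unions of countable
`⊆`-increasing chains. -/
def IsClubIn (X : Set Ordinal.{0}) (C : Set (Set Ordinal.{0})) : Prop :=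
  C ⊆ countPow X ∧ (∀ x ∈ countPow X, ∃ y ∈ C, x ⊆ y) ∧
    ∀ D : Set (Set Ordinal.{0}), D ⊆ C → D.Countable → D.Nonempty →
      IsChain (· ⊆ ·) D → ⋃₀ D ∈ C

/-- `S` is stationary in `[X]^ω`: it meets every club. -/
def IsStatIn (X : Set Ordinal.{0}) (S : Set (Set Ordinal.{0})) : Prop :=
  ∀ C, IsClubIn X C → (S ∩ C).Nonempty

/-- Club subsets of `ω₁` (closed unbounded in the ordinal `ω₁`). -/
def IsClubOmega1 (C : Set Ordinal.{0}) : Prop :=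
  C ⊆ Set.Iio omega1 ∧ (∀ α < omega1, ∃ β ∈ C, α < β) ∧
    ∀ α < omega1, α ≠ 0 → (∀ β < α, ∃ γ ∈ C, β < γ ∧ γ < α) → α ∈ C

/-- Stationary subsets of `ω₁`. -/
def IsStatOmega1 (A : Set Ordinal.{0}) : Prop :=
  ∀ C, IsClubOmega1 C → (A ∩ C).Nonempty

/-- A (continuous, `δ`-increasing) `ω₁`-chain: `⟨f α : α < ω₁⟩`. -/
def IsOmega1Chain (f : Ordinal.{0} → Set Ordinal.{0}) : Prop :=
  (∀ α β, α < β → β < omega1 → f α ⊆ f β) ∧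
  (∀ β < omega1, Order.IsSuccLimit β → f β = ⋃ α ∈ Set.Iio β, f α) ∧
  (∀ α β, α < β → β < omega1 → delta (f α) < delta (f β))

/-- The space `[Y]^{ω₁}` of subsets of `Y` of cardinality `ℵ₁`. -/
def aleph1Pow (Y : Set Ordinal.{0}) : Set (Set Ordinal.{0}) :=
  {X | X ⊆ Y ∧ Cardinal.mk X = Cardinal.aleph 1}

/-- `C` is club in `[Y]^{ω₁}`: cofinal and closed under unions of
`⊆`-increasing chains of length `ω₁`. -/
def IsClubAleph1 (Y : Set Ordinal.{0}) (C : Set (Set Ordinal.{0})) : Prop :=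
  C ⊆ aleph1Pow Y ∧ (∀ X ∈ aleph1Pow Y, ∃ Z ∈ C, X ⊆ Z) ∧
    ∀ f : Ordinal.{0} → Set Ordinal.{0}, (∀ α β, α < β → β < omega1 → f α ⊆ f β) →
      (∀ α < omega1, f α ∈ C) → (⋃ α ∈ Set.Iio omega1, f α) ∈ C

/-- `S` is a local club in `[Y]^ω`: the set of `X ∈ [Y]^{ω₁}` such that
`S ∩ [X]^ω` contains a club in `[X]^ω` contains a club in `[Y]^{ω₁}`. -/
def IsLocalClub (Y : Set Ordinal.{0}) (S : Set (Set Ordinal.{0})) : Prop :=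
  ∃ C, IsClubAleph1 Y C ∧ ∀ X ∈ C, ∃ D, IsClubIn X D ∧ D ⊆ S

/-- `S` is projective stationary in `[X]^ω`. -/
def ProjStationary (X : Set Ordinal.{0}) (S : Set (Set Ordinal.{0})) : Prop :=
  ∀ A ⊆ Set.Iio omega1, IsStatOmega1 A → IsStatIn X {x ∈ S | delta x ∈ A}

/-- `S ⊆ [κ]^ω` is spanning. -/
def IsSpanning (κ : Cardinal) (S : Set (Set Ordinal.{0})) : Prop :=
  ∀ lam : Cardinal, κ ≤ lam → ∀ C, IsClubIn (Set.Iio lam.ord) C →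
    ∃ D, IsClubIn (Set.Iio lam.ord) D ∧
      ∀ x ∈ D, ∃ y ∈ C, x ⊆ y ∧ delta x = delta y ∧ (y ∩ Set.Iio κ.ord) ∈ S

/-- `S ⊆ [X]^ω` is reflective: for every club `C`, `S ∩ C` contains an `ω₁`-chain. -/
def IsReflective (X : Set Ordinal.{0}) (S : Set (Set Ordinal.{0})) : Prop :=
  ∀ C, IsClubIn X C → ∃ f, IsOmega1Chain f ∧ ∀ α < omega1, f α ∈ S ∩ C

/-- `S ⊆ [X]^ω` is full. -/
def IsFull (X : Set Ordinal.{0}) (S : Set (Set Ordinal.{0})) : Prop :=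
  ∀ A ⊆ Set.Iio omega1, IsStatOmega1 A →
    ∃ B, B ⊆ A ∧ IsStatOmega1 B ∧ ∃ C, IsClubIn X C ∧ {x ∈ C | delta x ∈ B} ⊆ S

/-- The order type of a set of ordinals. -/
def otp (s : Set Ordinal.{0}) : Ordinal.{0} :=
  sInf {o : Ordinal.{0} | Nonempty (↥s ≃o ↥(Set.Iio o))}

/-- The nonstationary ideal on `ω₁` is saturated. -/
def NSSaturated : Prop :=
  ∀ W : Set (Set Ordinal.{0}), (∀ A ∈ W, A ⊆ Set.Iio omega1 ∧ IsStatOmega1 A) →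
    (∀ A ∈ W, ∀ B ∈ W, A ≠ B → ¬ IsStatOmega1 (A ∩ B)) →
    Cardinal.mk W ≤ Cardinal.aleph 1


lemma omega1_pos : (0 : Ordinal) < omega1 := by
  rw [omega1, Cardinal.lt_ord]; simpa using Cardinal.aleph0_lt_aleph_one.trans_le' (by simp)

lemma omega1_isLimit : Order.IsSuccLimit omega1 :=
  Cardinal.isSuccLimit_ord (Cardinal.aleph0_lt_aleph_one.le)

lemma isLim_mk {o : Ordinal.{0}} (h0 : o ≠ 0) (h : ∀ b < o, Order.succ b < o) :
    Order.IsSuccLimit o :=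
  Ordinal.isSuccLimit_iff.2 ⟨h0, Order.isSuccPrelimit_iff_succ_lt.2 h⟩

lemma countable_Iio_of_lt_omega1 {α : Ordinal.{0}} (h : α < omega1) :
    (Set.Iio α).Countable := by
  rw [Cardinal.countable_iff_lt_aleph_one, Ordinal.mk_Iio_ordinal,
    Cardinal.lift_lt_aleph_one]
  rwa [omega1, Cardinal.lt_ord] at h

lemma sSup_lt_omega1 {s : Set Ordinal.{0}} (hc : s.Countable)
    (h : ∀ a ∈ s, a < omega1) : sSup s < omega1 := by
  rcases s.eq_empty_or_nonempty with rfl | hne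
  · simpa using omega1_pos
  · obtain ⟨f, rfl⟩ := hc.exists_eq_range hne
    refine Ordinal.iSup_lt_ord ?_ fun i => h _ (Set.mem_range_self i)
    show #ℕ < (Cardinal.aleph 1).ord.cof
    rw [Cardinal.isRegular_aleph_one.cof_eq, Cardinal.mk_nat]
    exact Cardinal.aleph0_lt_aleph_one

lemma bddAbove_of_lt_omega1 {s : Set Ordinal.{0}} (h : ∀ a ∈ s, a < omega1) :
    BddAbove s := ⟨omega1, fun a ha => (h a ha).le⟩

lemma le_sSup_ord {s : Set Ordinal.{0}} (h : ∀ a ∈ s, a < omega1) {a : Ordinal}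
    (ha : a ∈ s) : a ≤ sSup s :=
  le_csSup (bddAbove_of_lt_omega1 h) ha

lemma lt_sSup_ord {s : Set Ordinal.{0}} (h : ∀ a ∈ s, a < omega1) (hne : s.Nonempty)
    {b : Ordinal} : b < sSup s ↔ ∃ a ∈ s, b < a := by
  rw [lt_csSup_iff (bddAbove_of_lt_omega1 h) hne]

lemma biUnion_Iio_eq {s : Set Ordinal.{0}} (h : ∀ a ∈ s, a < omega1) :
    ⋃ a ∈ s, Set.Iio a = Set.Iio (sSup s) := by
  rcases s.eq_empty_or_nonempty with rfl | hne
  · have h0 : sSup (∅ : Set Ordinal.{0}) = 0 := by simp [csSup_empty]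
    rw [h0]; ext ξ; simp
  · ext ξ
    simp only [Set.mem_iUnion, Set.mem_Iio, exists_prop]
    rw [lt_sSup_ord h hne]

lemma lt_add_one_ord (o : Ordinal.{0}) : o < o + 1 := by
  rw [Ordinal.add_one_eq_succ]; exact Order.lt_succ o

lemma Iio_ord_inj {a b : Ordinal.{0}} (h : Set.Iio a = Set.Iio b) : a = b := by
  by_contra hne
  rcases lt_or_gt_of_ne hne with hl | hl
  · have h2 : a ∈ Set.Iio b := hl
    rw [← h] at h2; simp at h2
  · have h2 : b ∈ Set.Iio a := hl
    rw [h] at h2; simp at h2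

lemma Iio_ord_subset {a b : Ordinal.{0}} (h : Set.Iio a ⊆ Set.Iio b) : a ≤ b := by
  by_contra hab
  push_neg at hab
  exact absurd (h hab) (by simp)

lemma delta_eq {x : Set Ordinal.{0}} {δ : Ordinal} (h : x ∩ Set.Iio omega1 = Set.Iio δ) :
    delta x = δ := by
  have : {δ' : Ordinal.{0} | x ∩ Set.Iio omega1 = Set.Iio δ'} = {δ} := by
    ext δ'
    simp only [Set.mem_setOf_eq, Set.mem_singleton_iff]
    constructor
    · intro h'; exact Iio_ord_inj (h'.symm.trans h)
    · rintro rfl; exact h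
  rw [delta, this, csInf_singleton]

lemma GoodSet.inter_eq {x : Set Ordinal.{0}} (h : GoodSet x) :
    x ∩ Set.Iio omega1 = Set.Iio (delta x) := by
  obtain ⟨δ, _, hδ⟩ := h
  rw [delta_eq hδ]; exact hδ

lemma GoodSet.delta_lt {x : Set Ordinal.{0}} (h : GoodSet x) : delta x < omega1 := by
  obtain ⟨δ, hδ1, hδ⟩ := h
  rw [delta_eq hδ]; exact hδ1

lemma delta_mono {x y : Set Ordinal.{0}} (hx : GoodSet x) (hy : GoodSet y) (h : x ⊆ y) :
    delta x ≤ delta y := by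
  refine Iio_ord_subset ?_
  rw [← hx.inter_eq, ← hy.inter_eq]
  exact Set.inter_subset_inter_left _ h

def gbd (z : Set Ordinal.{0}) : Ordinal.{0} :=
  sSup ((fun ξ => ξ + 1) '' (z ∩ Set.Iio omega1))

def goodify (z : Set Ordinal.{0}) : Set Ordinal.{0} := z ∪ Set.Iio (gbd z)

lemma gbd_lt_omega1 {z : Set Ordinal.{0}} (hz : z.Countable) : gbd z < omega1 := by
  refine sSup_lt_omega1 (Set.Countable.image (hz.mono (Set.inter_subset_left)) _) ?_
  rintro a ⟨ξ, ⟨-, hξ⟩, rfl⟩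
  exact omega1_isLimit.succ_lt hξ

lemma goodify_inter {z : Set Ordinal.{0}} (hz : z.Countable) :
    goodify z ∩ Set.Iio omega1 = Set.Iio (gbd z) := by
  apply Set.Subset.antisymm
  · rintro ξ ⟨hξ1 | hξ1, hξ2⟩
    · have : ξ + 1 ≤ gbd z :=
        le_sSup_ord (by rintro a ⟨η, ⟨-, hη⟩, rfl⟩; exact omega1_isLimit.succ_lt hη)
          ⟨ξ, ⟨hξ1, hξ2⟩, rfl⟩
      exact lt_of_lt_of_le (Order.lt_succ ξ) this
    · exact hξ1
  · intro ξ hξ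
    exact ⟨Or.inr hξ, lt_trans hξ (gbd_lt_omega1 hz)⟩

lemma goodify_good {z : Set Ordinal.{0}} (hz : z.Countable) : GoodSet (goodify z) :=
  ⟨gbd z, gbd_lt_omega1 hz, goodify_inter hz⟩

lemma goodify_delta {z : Set Ordinal.{0}} (hz : z.Countable) : delta (goodify z) = gbd z :=
  delta_eq (goodify_inter hz)

lemma subset_goodify (z : Set Ordinal.{0}) : z ⊆ goodify z := Set.subset_union_left

lemma goodify_countable {z : Set Ordinal.{0}} (hz : z.Countable) : (goodify z).Countable :=
  hz.union (countable_Iio_of_lt_omega1 (gbd_lt_omega1 hz))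

lemma goodify_subset {z Y : Set Ordinal.{0}} (hz : z ⊆ Y) (hY : Set.Iio omega1 ⊆ Y)
    (hc : z.Countable) : goodify z ⊆ Y :=
  Set.union_subset hz (fun ξ hξ => hY (lt_trans hξ (gbd_lt_omega1 hc)))

lemma gbd_of_good {x : Set Ordinal.{0}} (h : GoodSet x) : gbd x = delta x := by
  rw [gbd, h.inter_eq]
  apply le_antisymm
  · refine csSup_le' ?_
    rintro a ⟨ξ, hξ, rfl⟩
    exact Order.succ_le_of_lt hξ
  · rcases eq_zero_or_pos (delta x) with h0 | h0
    · simp [h0]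
    · refine le_of_forall_lt fun ξ hξ => lt_of_lt_of_le (Order.lt_succ ξ) ?_
      refine le_sSup_ord ?_ ⟨ξ, hξ, rfl⟩
      rintro a ⟨η, hη, rfl⟩
      exact omega1_isLimit.succ_lt (lt_trans hη h.delta_lt)

lemma goodSet_sUnion {D : Set (Set Ordinal.{0})} (hc : D.Countable)
    (hg : ∀ z ∈ D, GoodSet z) :
    (⋃₀ D) ∩ Set.Iio omega1 = Set.Iio (sSup (delta '' D)) ∧ GoodSet (⋃₀ D) := by
  have hlt : ∀ a ∈ delta '' D, a < omega1 := by
    rintro a ⟨z, hz, rfl⟩; exact (hg z hz).delta_lt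
  have h1 : (⋃₀ D) ∩ Set.Iio omega1 = Set.Iio (sSup (delta '' D)) := by
    rw [← biUnion_Iio_eq hlt]
    ext ξ
    simp only [Set.mem_inter_iff, Set.mem_sUnion, Set.mem_iUnion, exists_prop]
    constructor
    · rintro ⟨⟨z, hz, hξz⟩, hξ⟩
      exact ⟨delta z, ⟨z, hz, rfl⟩, by
        have := (hg z hz).inter_eq
        have : ξ ∈ z ∩ Set.Iio omega1 := ⟨hξz, hξ⟩
        rwa [(hg z hz).inter_eq] at this⟩
    · rintro ⟨a, ⟨z, hz, rfl⟩, hξ⟩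
      have : ξ ∈ z ∩ Set.Iio omega1 := by rw [(hg z hz).inter_eq]; exact hξ
      exact ⟨⟨z, hz, this.1⟩, this.2⟩
  exact ⟨h1, sSup (delta '' D), sSup_lt_omega1 (hc.image _) hlt, h1⟩

lemma countPow_sUnion {X : Set Ordinal.{0}} {D : Set (Set Ordinal.{0})}
    (hD : D ⊆ countPow X) (hc : D.Countable) : ⋃₀ D ∈ countPow X := by
  refine ⟨Set.sUnion_subset fun z hz => (hD hz).1, Set.Countable.sUnion hc fun z hz => (hD hz).2.1, ?_⟩
  exact (goodSet_sUnion hc fun z hz => (hD hz).2.2).2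

/-! ### Hull machinery for clubs in `[Y]^ω` -/

open Classical in
noncomputable def gext (Y : Set Ordinal.{0}) (C' : Set (Set Ordinal.{0}))
    (z : Set Ordinal.{0}) : Set Ordinal.{0} :=
  if hz : ∃ y, y ∈ C' ∧ goodify z ⊆ y then hz.choose else ∅

lemma gext_spec {Y : Set Ordinal.{0}} {C' : Set (Set Ordinal.{0})}
    (hC : IsClubIn Y C') (hY : Set.Iio omega1 ⊆ Y) {z : Set Ordinal.{0}}
    (hz1 : z ⊆ Y) (hz2 : z.Countable) :
    gext Y C' z ∈ C' ∧ z ⊆ gext Y C' z := by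
  have hg : goodify z ∈ countPow Y :=
    ⟨goodify_subset hz1 hY hz2, goodify_countable hz2, goodify_good hz2⟩
  obtain ⟨y, hy, hsub⟩ := hC.2.1 _ hg
  have hex : ∃ y, y ∈ C' ∧ goodify z ⊆ y := ⟨y, hy, hsub⟩
  rw [gext, dif_pos hex]
  exact ⟨hex.choose_spec.1, (subset_goodify z).trans hex.choose_spec.2⟩

noncomputable def hullFin (Y : Set Ordinal.{0}) (C' : Set (Set Ordinal.{0})) :
    Finset Ordinal.{0} → Set Ordinal.{0}
  | e => gext Y C'
      ((↑e : Set Ordinal.{0}) ∪ ⋃ p : {e' : Finset Ordinal.{0} // e' ⊂ e}, hullFin Y C' p.1)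
termination_by e => e.card
decreasing_by exact Finset.card_lt_card p.2

instance finite_ssub (e : Finset Ordinal.{0}) : Finite {e' : Finset Ordinal.{0} // e' ⊂ e} := by
  refine Finite.of_injective
    (fun p => (⟨p.1, Finset.mem_powerset.2 p.2.subset⟩ : {z // z ∈ e.powerset})) ?_
  intro p q h
  simpa [Subtype.ext_iff] using h

lemma hullFin_spec {Y : Set Ordinal.{0}} {C' : Set (Set Ordinal.{0})}
    (hC : IsClubIn Y C') (hY : Set.Iio omega1 ⊆ Y) :
    ∀ (e : Finset Ordinal.{0}), (↑e : Set Ordinal.{0}) ⊆ Y →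
      hullFin Y C' e ∈ C' ∧ (↑e : Set Ordinal.{0}) ⊆ hullFin Y C' e ∧
        ∀ e' : Finset Ordinal.{0}, e' ⊂ e → hullFin Y C' e' ⊆ hullFin Y C' e := by
  intro e
  induction e using Finset.strongInduction with
  | H e ih =>
    intro he
    set z : Set Ordinal.{0} :=
      (↑e : Set Ordinal.{0}) ∪ ⋃ p : {e' : Finset Ordinal.{0} // e' ⊂ e}, hullFin Y C' p.1 with hzdef
    have hmem : ∀ p : {e' : Finset Ordinal.{0} // e' ⊂ e}, hullFin Y C' p.1 ∈ C' := by
      rintro ⟨e', he'⟩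
      exact (ih e' he' ((Finset.coe_subset.2 he'.subset).trans he)).1
    have hz1 : z ⊆ Y := by
      refine Set.union_subset he ?_
      refine Set.iUnion_subset fun p => ?_
      exact (hC.1 (hmem p)).1
    have hz2 : z.Countable := by
      refine Set.Countable.union (e.countable_toSet) ?_
      exact Set.countable_iUnion fun p => (hC.1 (hmem p)).2.1
    have hspec := gext_spec hC hY hz1 hz2
    have heq : hullFin Y C' e = gext Y C' z := by rw [hullFin]
    refine ⟨heq ▸ hspec.1, ?_, ?_⟩
    · rw [heq]; exact (Set.subset_union_left).trans hspec.2
    · intro e' he'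
      rw [heq]
      refine Set.Subset.trans ?_ hspec.2
      exact Set.Subset.trans (Set.subset_iUnion (fun p : {e' : Finset Ordinal.{0} // e' ⊂ e} =>
        hullFin Y C' p.1) ⟨e', he'⟩) Set.subset_union_right

lemma hullFin_mono {Y : Set Ordinal.{0}} {C' : Set (Set Ordinal.{0})}
    (hC : IsClubIn Y C') (hY : Set.Iio omega1 ⊆ Y) {e₁ e₂ : Finset Ordinal.{0}}
    (h : e₁ ⊆ e₂) (he₂ : (↑e₂ : Set Ordinal.{0}) ⊆ Y) :
    hullFin Y C' e₁ ⊆ hullFin Y C' e₂ := by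
  rcases eq_or_ne e₁ e₂ with rfl | hne
  · exact subset_rfl
  · exact (hullFin_spec hC hY e₂ he₂).2.2 e₁ (ssubset_of_ne_of_subset hne h)

noncomputable def hull (Y : Set Ordinal.{0}) (C' : Set (Set Ordinal.{0}))
    (x : Set Ordinal.{0}) : Set Ordinal.{0} :=
  ⋃ e ∈ {e : Finset Ordinal.{0} | (↑e : Set Ordinal.{0}) ⊆ x}, hullFin Y C' e

lemma hull_mono {Y : Set Ordinal.{0}} {C' : Set (Set Ordinal.{0})} {x x' : Set Ordinal.{0}}
    (h : x ⊆ x') : hull Y C' x ⊆ hull Y C' x' := by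
  refine Set.iUnion₂_subset fun e he => ?_
  have he' : (↑e : Set Ordinal.{0}) ⊆ x := he
  exact Set.subset_iUnion₂ (s := fun e _ => hullFin Y C' e) e (he'.trans h)

lemma subset_hull {Y : Set Ordinal.{0}} {C' : Set (Set Ordinal.{0})}
    (hC : IsClubIn Y C') (hY : Set.Iio omega1 ⊆ Y) {x : Set Ordinal.{0}} (hx : x ⊆ Y) :
    x ⊆ hull Y C' x := by
  intro ξ hξ
  have h1 : (↑({ξ} : Finset Ordinal.{0}) : Set Ordinal.{0}) ⊆ x := by simpa using hξ
  have h2 := (hullFin_spec hC hY {ξ} (h1.trans hx)).2.1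
  exact Set.mem_biUnion h1 (h2 (by simp))

lemma finset_subset_of_chain {E : Set (Set Ordinal.{0})} (hch : IsChain (· ⊆ ·) E)
    (hne : E.Nonempty) (e : Finset Ordinal.{0}) (h : (↑e : Set Ordinal.{0}) ⊆ ⋃₀ E) :
    ∃ z ∈ E, (↑e : Set Ordinal.{0}) ⊆ z := by
  classical
  induction e using Finset.induction with
  | empty => exact ⟨hne.choose, hne.choose_spec, by simp⟩
  | @insert a s ha ih =>
    have hs : (↑s : Set Ordinal.{0}) ⊆ ⋃₀ E := by
      refine Set.Subset.trans ?_ h; simp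
    obtain ⟨z₁, hz₁, hsz₁⟩ := ih hs
    have haE : a ∈ ⋃₀ E := h (by simp)
    obtain ⟨z₂, hz₂, haz₂⟩ := haE
    rcases eq_or_ne z₁ z₂ with rfl | hne'
    · exact ⟨z₁, hz₁, by simp [Set.insert_subset_iff, haz₂, hsz₁]⟩
    rcases hch hz₁ hz₂ hne' with hle | hle
    · exact ⟨z₂, hz₂, by simp [Set.insert_subset_iff, haz₂, hsz₁.trans hle]⟩
    · exact ⟨z₁, hz₁, by simp [Set.insert_subset_iff, hle haz₂, hsz₁]⟩

lemma hull_sUnion_chain {Y : Set Ordinal.{0}} {C' : Set (Set Ordinal.{0})}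
    {E : Set (Set Ordinal.{0})} (hch : IsChain (· ⊆ ·) E) (hne : E.Nonempty) :
    hull Y C' (⋃₀ E) = ⋃ z ∈ E, hull Y C' z := by
  apply Set.Subset.antisymm
  · refine Set.iUnion₂_subset fun e he => ?_
    obtain ⟨z, hz, hez⟩ := finset_subset_of_chain hch hne e he
    refine Set.Subset.trans ?_ (Set.subset_iUnion₂ (s := fun z _ => hull Y C' z) z hz)
    exact Set.subset_iUnion₂ (s := fun e _ => hullFin Y C' e) e hez
  · refine Set.iUnion₂_subset fun z hz => ?_
    exact hull_mono (fun ξ hξ => ⟨z, hz, hξ⟩)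

lemma hull_mem {Y : Set Ordinal.{0}} {C' : Set (Set Ordinal.{0})}
    (hC : IsClubIn Y C') (hY : Set.Iio omega1 ⊆ Y) {x : Set Ordinal.{0}}
    (hx : x ∈ countPow Y) : hull Y C' x ∈ C' := by
  classical
  rcases x.eq_empty_or_nonempty with rfl | hne
  · have : {e : Finset Ordinal.{0} | (↑e : Set Ordinal.{0}) ⊆ (∅ : Set Ordinal.{0})} =
        {(∅ : Finset Ordinal.{0})} := by
      ext e; simp
    rw [hull, this]
    simpa using (hullFin_spec hC hY ∅ (by simp)).1
  · obtain ⟨f, hf⟩ := hx.2.1.exists_eq_range hne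
    set en : ℕ → Finset Ordinal.{0} := fun n => Finset.image f (Finset.range n) with hen
    have hensub : ∀ n, (↑(en n) : Set Ordinal.{0}) ⊆ x := by
      intro n ξ hξ
      simp only [hen, Finset.coe_image, Finset.coe_range, Set.mem_image] at hξ
      obtain ⟨k, -, rfl⟩ := hξ
      rw [hf]; exact Set.mem_range_self k
    have henY : ∀ n, (↑(en n) : Set Ordinal.{0}) ⊆ Y := fun n => (hensub n).trans hx.1
    have hmono : ∀ m n, m ≤ n → hullFin Y C' (en m) ⊆ hullFin Y C' (en n) := by
      intro m n hmn
      refine hullFin_mono hC hY ?_ (henY n)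
      exact Finset.image_subset_image (Finset.range_subset_range.2 hmn)
    set D : Set (Set Ordinal.{0}) := Set.range (fun n => hullFin Y C' (en n)) with hD
    have hDC : D ⊆ C' := by rintro - ⟨n, rfl⟩; exact (hullFin_spec hC hY (en n) (henY n)).1
    have hDch : IsChain (· ⊆ ·) D := by
      rintro - ⟨m, rfl⟩ - ⟨n, rfl⟩ -
      rcases le_total m n with h | h
      · exact Or.inl (hmono m n h)
      · exact Or.inr (hmono n m h)
    have hmem : ⋃₀ D ∈ C' := hC.2.2 D hDC (Set.countable_range _) ⟨_, ⟨0, rfl⟩⟩ hDch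
    have heq : ⋃₀ D = hull Y C' x := by
      apply Set.Subset.antisymm
      · rintro ξ ⟨-, ⟨n, rfl⟩, hξ⟩
        exact Set.mem_biUnion (hensub n) hξ
      · refine Set.iUnion₂_subset fun e he => ?_
        have : ∃ n, e ⊆ en n := by
          induction e using Finset.induction with
          | empty => exact ⟨0, by simp⟩
          | @insert a s ha ih =>
            have hsx : (↑s : Set Ordinal.{0}) ⊆ x := by
              refine Set.Subset.trans ?_ he; simp
            obtain ⟨n₀, hn₀⟩ := ih hsx
            have hax : a ∈ x := he (by simp)
            rw [hf] at hax
            obtain ⟨k, hk⟩ := hax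
            refine ⟨max (k + 1) n₀, Finset.insert_subset ?_ ?_⟩
            · simp only [hen, Finset.mem_image]
              exact ⟨k, by simp [Nat.lt_of_lt_of_le (Nat.lt_succ_self k) (le_max_left _ _)], hk⟩
            · refine hn₀.trans ?_
              exact Finset.image_subset_image (Finset.range_subset_range.2 (le_max_right _ _))
        obtain ⟨n, hn⟩ := this
        refine Set.Subset.trans (hullFin_mono hC hY hn (henY n)) ?_
        exact fun ξ hξ => ⟨_, ⟨n, rfl⟩, hξ⟩
    rwa [heq] at hmem

lemma iterate_props {Y : Set Ordinal.{0}} {C₁ C₂ : Set (Set Ordinal.{0})}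
    (h1 : IsClubIn Y C₁) (h2 : IsClubIn Y C₂) (hY : Set.Iio omega1 ⊆ Y)
    {x : Set Ordinal.{0}} (hx : x ∈ countPow Y) :
    let g : Set Ordinal.{0} → Set Ordinal.{0} := fun w => hull Y C₂ (hull Y C₁ w)
    (∀ n, g^[n] x ∈ countPow Y) ∧ (∀ n, g^[n] x ⊆ g^[n+1] x) := by
  intro g
  have hstep : ∀ w, w ∈ countPow Y → g w ∈ countPow Y ∧ w ⊆ g w := by
    intro w hw
    have hw1 : hull Y C₁ w ∈ C₁ := hull_mem h1 hY hw
    have hw1' : hull Y C₁ w ∈ countPow Y := h1.1 hw1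
    have hw2 : hull Y C₂ (hull Y C₁ w) ∈ C₂ := hull_mem h2 hY hw1'
    exact ⟨h2.1 hw2, (subset_hull h1 hY hw.1).trans (subset_hull h2 hY hw1'.1)⟩
  have hcp : ∀ n, g^[n] x ∈ countPow Y := by
    intro n; induction n with
    | zero => simpa using hx
    | succ n ih => rw [Function.iterate_succ_apply']; exact (hstep _ ih).1
  exact ⟨hcp, fun n => by rw [Function.iterate_succ_apply']; exact (hstep _ (hcp n)).2⟩

lemma club_inter {Y : Set Ordinal.{0}} {C₁ C₂ : Set (Set Ordinal.{0})}
    (hY : Set.Iio omega1 ⊆ Y) (h1 : IsClubIn Y C₁) (h2 : IsClubIn Y C₂) :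
    IsClubIn Y (C₁ ∩ C₂) := by
  refine ⟨fun z hz => h1.1 hz.1, ?_, ?_⟩
  · intro x hx
    set g : Set Ordinal.{0} → Set Ordinal.{0} := fun w => hull Y C₂ (hull Y C₁ w) with hg
    obtain ⟨hcp, hsub⟩ := iterate_props h1 h2 hY hx
    have hmono : ∀ m n, m ≤ n → g^[m] x ⊆ g^[n] x := by
      intro m n hmn
      induction hmn with
      | refl => exact subset_rfl
      | step h ih => exact ih.trans (hsub _)
    set D : Set (Set Ordinal.{0}) := Set.range (fun n => g^[n] x) with hD
    have hDsub : D ⊆ countPow Y := by rintro - ⟨n, rfl⟩; exact hcp n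
    have hDch : IsChain (· ⊆ ·) D := by
      rintro - ⟨m, rfl⟩ - ⟨n, rfl⟩ -
      rcases le_total m n with h | h
      · exact Or.inl (hmono m n h)
      · exact Or.inr (hmono n m h)
    have hDne : D.Nonempty := ⟨x, 0, rfl⟩
    set u : Set Ordinal.{0} := ⋃₀ D with hu
    have hucp : u ∈ countPow Y := countPow_sUnion hDsub (Set.countable_range _)
    have hkey : ∀ n, hull Y C₁ (g^[n] x) ⊆ u ∧ hull Y C₂ (g^[n] x) ⊆ u := by
      intro n
      have h1n : hull Y C₁ (g^[n] x) ⊆ g^[n+1] x := by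
        rw [Function.iterate_succ_apply']
        exact subset_hull h2 hY (h1.1 (hull_mem h1 hY (hcp n))).1
      have h2n : hull Y C₂ (g^[n] x) ⊆ g^[n+1] x := by
        rw [Function.iterate_succ_apply']
        exact hull_mono (subset_hull h1 hY (hcp n).1)
      have : g^[n+1] x ⊆ u := fun ξ hξ => ⟨_, ⟨n+1, rfl⟩, hξ⟩
      exact ⟨h1n.trans this, h2n.trans this⟩
    have hfix : ∀ (C₀ : Set (Set Ordinal.{0})), IsClubIn Y C₀ →
        (∀ n, hull Y C₀ (g^[n] x) ⊆ u) → u ∈ C₀ := by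
      intro C₀ h0 hn
      have : hull Y C₀ u = u := by
        apply Set.Subset.antisymm
        · rw [hu, hull_sUnion_chain hDch hDne]
          refine Set.iUnion₂_subset ?_
          rintro - ⟨n, rfl⟩
          exact hn n
        · exact subset_hull h0 hY hucp.1
      rw [← this]
      exact hull_mem h0 hY hucp
    refine ⟨u, ⟨hfix C₁ h1 fun n => (hkey n).1, hfix C₂ h2 fun n => (hkey n).2⟩, ?_⟩
    exact fun ξ hξ => ⟨x, ⟨0, rfl⟩, hξ⟩
  · intro D hD hDc hDne hDch
    exact ⟨h1.2.2 D (fun z hz => (hD hz).1) hDc hDne hDch,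
           h2.2.2 D (fun z hz => (hD hz).2) hDc hDne hDch⟩

/-! ### clubs in ω₁ -/

lemma clubOmega1_interleave {c₁ c₂ : Set Ordinal.{0}} (h1 : IsClubOmega1 c₁)
    (h2 : IsClubOmega1 c₂) {α₀ : Ordinal.{0}} (hα₀ : α₀ < omega1) :
    ∃ σ, α₀ < σ ∧ σ < omega1 ∧ 0 < σ ∧
      (∀ β < σ, ∃ γ ∈ c₁, β < γ ∧ γ < σ) ∧ (∀ β < σ, ∃ γ ∈ c₂, β < γ ∧ γ < σ) := by
  classical
  have hF : ∀ c : Set Ordinal.{0}, IsClubOmega1 c → ∃ F : Ordinal.{0} → Ordinal.{0},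
      ∀ α < omega1, F α ∈ c ∧ α < F α ∧ F α < omega1 := by
    intro c hc
    choose F hF1 hF2 using fun α => fun h : α < omega1 => hc.2.1 α h
    refine ⟨fun α => if h : α < omega1 then F α h else 0, fun α hα => ?_⟩
    simp only [dif_pos hα]
    exact ⟨hF1 α hα, hF2 α hα, hc.1 (hF1 α hα)⟩
  obtain ⟨F₁, hF₁⟩ := hF c₁ h1
  obtain ⟨F₂, hF₂⟩ := hF c₂ h2
  set g : Ordinal.{0} → Ordinal.{0} := fun α => F₂ (F₁ α) with hg
  set s : ℕ → Ordinal.{0} := fun n => g^[n] (α₀ + 1) with hs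
  have hα₀1 : α₀ + 1 < omega1 := omega1_isLimit.succ_lt hα₀
  have hstep : ∀ α, α < omega1 →
      α < F₁ α ∧ F₁ α < g α ∧ g α < omega1 ∧ F₁ α ∈ c₁ ∧ g α ∈ c₂ := by
    intro α hα
    obtain ⟨m1, m2, m3⟩ := hF₁ α hα
    obtain ⟨k1, k2, k3⟩ := hF₂ _ m3
    exact ⟨m2, k2, k3, m1, k1⟩
  have hss : ∀ n, s (n+1) = g (s n) := fun n => Function.iterate_succ_apply' g n _
  have hslt : ∀ n, s n < omega1 := by
    intro n; induction n with
    | zero => exact hα₀1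
    | succ n ih => rw [hss n]; exact (hstep _ ih).2.2.1
  have hmono : ∀ n, s n < s (n+1) := fun n => by
    rw [hss n]; exact (hstep _ (hslt n)).1.trans (hstep _ (hslt n)).2.1
  have hrlt : ∀ a ∈ Set.range s, a < omega1 := by rintro - ⟨n, rfl⟩; exact hslt n
  set σ := sSup (Set.range s) with hσ
  have hσlt : σ < omega1 := sSup_lt_omega1 (Set.countable_range s) hrlt
  have hle : ∀ n, s n ≤ σ := fun n => le_sSup_ord hrlt ⟨n, rfl⟩
  have hs0 : α₀ < s 0 := Order.lt_succ α₀
  have h1σ : α₀ < σ := lt_of_lt_of_le hs0 (hle 0)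
  have hβ : ∀ β < σ, ∃ n, β < s n := by
    intro β hβ
    obtain ⟨-, ⟨n, rfl⟩, h⟩ := (lt_sSup_ord hrlt ⟨s 0, 0, rfl⟩).1 hβ
    exact ⟨n, h⟩
  refine ⟨σ, h1σ, hσlt, lt_of_le_of_lt (show (0 : Ordinal) ≤ α₀ from zero_le) h1σ, ?_, ?_⟩
  · intro β hβσ
    obtain ⟨n, hn⟩ := hβ β hβσ
    refine ⟨F₁ (s n), (hstep _ (hslt n)).2.2.2.1, hn.trans (hstep _ (hslt n)).1, ?_⟩
    calc F₁ (s n) < g (s n) := (hstep _ (hslt n)).2.1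
    _ = s (n+1) := (hss n).symm
    _ < s (n+2) := hmono (n+1)
    _ ≤ σ := hle (n+2)
  · intro β hβσ
    obtain ⟨n, hn⟩ := hβ β hβσ
    refine ⟨s (n+1), by rw [hss n]; exact (hstep _ (hslt n)).2.2.2.2, ?_, ?_⟩
    · refine hn.trans ?_
      rw [hss n]; exact (hstep _ (hslt n)).1.trans (hstep _ (hslt n)).2.1
    · exact lt_of_lt_of_le (hmono (n+1)) (hle (n+2))

lemma clubOmega1_inter {c₁ c₂ : Set Ordinal.{0}} (h1 : IsClubOmega1 c₁)
    (h2 : IsClubOmega1 c₂) : IsClubOmega1 (c₁ ∩ c₂) := by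
  refine ⟨fun α hα => h1.1 hα.1, ?_, ?_⟩
  · intro α hα
    obtain ⟨σ, hσ1, hσ2, hσ3, hσ4, hσ5⟩ := clubOmega1_interleave h1 h2 hα
    exact ⟨σ, ⟨h1.2.2 σ hσ2 hσ3.ne' hσ4, h2.2.2 σ hσ2 hσ3.ne' hσ5⟩, hσ1⟩
  · intro α hα hα0 hacc
    constructor
    · exact h1.2.2 α hα hα0 fun β hβ => by
        obtain ⟨γ, hγ, h⟩ := hacc β hβ; exact ⟨γ, hγ.1, h⟩
    · exact h2.2.2 α hα hα0 fun β hβ => by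
        obtain ⟨γ, hγ, h⟩ := hacc β hβ; exact ⟨γ, hγ.2, h⟩

def accPts (c : Set Ordinal.{0}) : Set Ordinal.{0} :=
  {α | 0 < α ∧ α < omega1 ∧ ∀ β < α, ∃ γ ∈ c, β < γ ∧ γ < α}

lemma accPts_subset {c : Set Ordinal.{0}} (hc : IsClubOmega1 c) : accPts c ⊆ c :=
  fun α hα => hc.2.2 α hα.2.1 hα.1.ne' hα.2.2

lemma accPts_isLimit {c : Set Ordinal.{0}} {α : Ordinal} (hα : α ∈ accPts c) :
    Order.IsSuccLimit α := by
  refine isLim_mk hα.1.ne' fun β hβ => ?_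
  obtain ⟨γ, -, hγ1, hγ2⟩ := hα.2.2 β hβ
  exact lt_of_le_of_lt (Order.succ_le_of_lt hγ1) hγ2

lemma clubOmega1_accPts {c : Set Ordinal.{0}} (hc : IsClubOmega1 c) :
    IsClubOmega1 (accPts c) := by
  refine ⟨fun α hα => hα.2.1, ?_, ?_⟩
  · intro α hα
    obtain ⟨σ, hσ1, hσ2, hσ3, hσ4, -⟩ := clubOmega1_interleave hc hc hα
    exact ⟨σ, ⟨hσ3, hσ2, hσ4⟩, hσ1⟩
  · intro α hα hα0 hacc
    refine ⟨pos_iff_ne_zero.2 hα0, hα, fun β hβ => ?_⟩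
    obtain ⟨γ', hγ', hβγ', hγ'α⟩ := hacc β hβ
    obtain ⟨γ, hγ, hβγ, hγγ'⟩ := hγ'.2.2 β hβγ'
    exact ⟨γ, hγ, hβγ, hγγ'.trans hγ'α⟩

/-! ### projection of clubs and lifting of projective stationarity -/

lemma omega1_le_ord {c : Cardinal.{0}} (h : Cardinal.aleph0 < c) : omega1 ≤ c.ord := by
  rw [omega1]
  apply Cardinal.ord_le_ord.2
  rw [← Cardinal.succ_aleph0]
  exact Order.succ_le_of_lt h

def IsFilt (lam : Cardinal.{0}) (X : Set Ordinal.{0}) (x : Ordinal.{0} → Set Ordinal.{0}) : Prop :=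
  (∀ α < omega1, x α ∈ countPow (Set.Iio lam.ord)) ∧
  (∀ α β, α ≤ β → β < omega1 → x α ⊆ x β) ∧
  (∀ β < omega1, Order.IsSuccLimit β → x β = ⋃ α ∈ Set.Iio β, x α) ∧
  X = ⋃ α ∈ Set.Iio omega1, x α

def spanT (kappa lam : Cardinal.{0}) (S C : Set (Set Ordinal.{0})) : Set (Set Ordinal.{0}) :=
  {z | z ∈ countPow (Set.Iio lam.ord) ∧
    ∃ y ∈ C, z ⊆ y ∧ delta z = delta y ∧ y ∩ Set.Iio kappa.ord ∈ S}

section Main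

variable {kappa lam : Cardinal.{0}}

lemma hYκ (hκ : Cardinal.aleph0 < kappa) : Set.Iio omega1 ⊆ Set.Iio kappa.ord :=
  fun ξ hξ => lt_of_lt_of_le hξ (omega1_le_ord hκ)

lemma hYl (hκ : Cardinal.aleph0 < kappa) (hkl : kappa ≤ lam) :
    Set.Iio omega1 ⊆ Set.Iio lam.ord :=
  fun ξ hξ => lt_of_lt_of_le hξ ((omega1_le_ord hκ).trans (Cardinal.ord_le_ord.2 hkl))

lemma Ykl (hkl : kappa ≤ lam) : Set.Iio kappa.ord ⊆ Set.Iio lam.ord :=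
  fun ξ hξ => lt_of_lt_of_le hξ (Cardinal.ord_le_ord.2 hkl)

lemma countPow_kl (hkl : kappa ≤ lam) {z : Set Ordinal.{0}}
    (h : z ∈ countPow (Set.Iio kappa.ord)) : z ∈ countPow (Set.Iio lam.ord) :=
  ⟨h.1.trans (Ykl hkl), h.2.1, h.2.2⟩

/-- The projection club for a club `C'` in `[λ]^ω`. -/
lemma proj_club (hκ : Cardinal.aleph0 < kappa) (hkl : kappa ≤ lam)
    {C' : Set (Set Ordinal.{0})} (hC' : IsClubIn (Set.Iio lam.ord) C') :
    ∃ D, IsClubIn (Set.Iio kappa.ord) D ∧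
      ∀ x ∈ D, hull (Set.Iio lam.ord) C' x ∈ C' ∧
        hull (Set.Iio lam.ord) C' x ∩ Set.Iio kappa.ord = x ∧
        delta (hull (Set.Iio lam.ord) C' x) = delta x := by
  set Yκ := Set.Iio kappa.ord with hYκdef
  set Yl := Set.Iio lam.ord with hYldef
  have hYk : Set.Iio omega1 ⊆ Yκ := hYκ hκ
  have hYl : Set.Iio omega1 ⊆ Yl := hYl hκ hkl
  set H : Set Ordinal.{0} → Set Ordinal.{0} := hull Yl C' with hH
  set D : Set (Set Ordinal.{0}) := {x ∈ countPow Yκ | H x ∩ Yκ = x} with hD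
  have hmeml : ∀ {x}, x ∈ countPow Yκ → x ∈ countPow Yl := fun hx => countPow_kl hkl hx
  have hHC : ∀ {x}, x ∈ countPow Yκ → H x ∈ C' := fun hx => hull_mem hC' hYl (hmeml hx)
  have hdelta : ∀ {x}, x ∈ countPow Yκ → H x ∩ Yκ = x → delta (H x) = delta x := by
    intro x hx hfix
    apply delta_eq
    have h1 : H x ∩ Set.Iio omega1 = (H x ∩ Yκ) ∩ Set.Iio omega1 := by
      ext ξ
      constructor
      · rintro ⟨h1, h2⟩; exact ⟨⟨h1, hYk h2⟩, h2⟩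
      · rintro ⟨⟨h1, -⟩, h2⟩; exact ⟨h1, h2⟩
    rw [h1, hfix, hx.2.2.inter_eq]
  refine ⟨D, ⟨fun z hz => hz.1, ?_, ?_⟩, ?_⟩
  · -- cofinal
    intro x hx
    set p : Set Ordinal.{0} → Set Ordinal.{0} := fun w => goodify (H w ∩ Yκ) with hp
    have hstep : ∀ w, w ∈ countPow Yκ → p w ∈ countPow Yκ ∧ w ⊆ p w := by
      intro w hw
      have h1 : H w ∈ C' := hHC hw
      have h2 : (H w ∩ Yκ).Countable := ((hC'.1 h1).2.1).mono Set.inter_subset_left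
      have h3 : H w ∩ Yκ ⊆ Yκ := Set.inter_subset_right
      refine ⟨⟨goodify_subset h3 hYk h2, goodify_countable h2, goodify_good h2⟩, ?_⟩
      have h4 : w ⊆ H w := subset_hull hC' hYl (hmeml hw).1
      exact (Set.subset_inter h4 hw.1).trans (subset_goodify _)
    have hcp : ∀ n, p^[n] x ∈ countPow Yκ := by
      intro n; induction n with
      | zero => simpa using hx
      | succ n ih => rw [Function.iterate_succ_apply']; exact (hstep _ ih).1
    have hsub : ∀ n, p^[n] x ⊆ p^[n+1] x := fun n => by
      rw [Function.iterate_succ_apply']; exact (hstep _ (hcp n)).2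
    have hmono : ∀ m n, m ≤ n → p^[m] x ⊆ p^[n] x := by
      intro m n hmn
      induction hmn with
      | refl => exact subset_rfl
      | step h ih => exact ih.trans (hsub _)
    set E : Set (Set Ordinal.{0}) := Set.range (fun n => p^[n] x) with hE
    have hEch : IsChain (· ⊆ ·) E := by
      rintro - ⟨m, rfl⟩ - ⟨n, rfl⟩ -
      rcases le_total m n with h | h
      · exact Or.inl (hmono m n h)
      · exact Or.inr (hmono n m h)
    have hEne : E.Nonempty := ⟨x, 0, rfl⟩
    set u : Set Ordinal.{0} := ⋃₀ E with hu
    have hucp : u ∈ countPow Yκ := countPow_sUnion (by rintro - ⟨n, rfl⟩; exact hcp n)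
      (Set.countable_range _)
    have hfix : H u ∩ Yκ = u := by
      apply Set.Subset.antisymm
      · rw [hu, hH, hull_sUnion_chain hEch hEne]
        rintro ξ ⟨hξ1, hξ2⟩
        simp only [Set.mem_iUnion] at hξ1
        obtain ⟨-, ⟨⟨n, rfl⟩, hmem⟩⟩ := hξ1
        have : ξ ∈ hull Yl C' (p^[n] x) ∩ Yκ := ⟨hmem, hξ2⟩
        have h5 : ξ ∈ p^[n+1] x := by
          rw [Function.iterate_succ_apply']
          exact subset_goodify _ this
        exact ⟨_, ⟨n+1, rfl⟩, h5⟩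
      · exact Set.subset_inter (subset_hull hC' hYl (hmeml hucp).1) hucp.1
    exact ⟨u, ⟨hucp, hfix⟩, fun ξ hξ => ⟨x, ⟨0, rfl⟩, hξ⟩⟩
  · -- closed
    intro E hE hEc hEne hEch
    have hucp : ⋃₀ E ∈ countPow Yκ := countPow_sUnion (fun z hz => (hE hz).1) hEc
    refine ⟨hucp, ?_⟩
    apply Set.Subset.antisymm
    · rw [hH, hull_sUnion_chain hEch hEne]
      rintro ξ ⟨hξ1, hξ2⟩
      simp only [Set.mem_iUnion] at hξ1
      obtain ⟨z, ⟨hz, hmem⟩⟩ := hξ1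
      have : ξ ∈ hull Yl C' z ∩ Yκ := ⟨hmem, hξ2⟩
      rw [(hE hz).2] at this
      exact ⟨z, hz, this⟩
    · exact Set.subset_inter (subset_hull hC' hYl (hmeml hucp).1) hucp.1
  · intro x hx
    exact ⟨hHC hx.1, hx.2, hdelta hx.1 hx.2⟩

/-- Lifting projective stationarity from `[κ]^ω` to `[λ]^ω`. -/
lemma stat_lift (hκ : Cardinal.aleph0 < kappa) (hkl : kappa ≤ lam) {S : Set (Set Ordinal.{0})}
    (hps : ProjStationary (Set.Iio kappa.ord) S)
    {A : Set Ordinal.{0}} (hA : A ⊆ Set.Iio omega1) (hAs : IsStatOmega1 A)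
    {C' : Set (Set Ordinal.{0})} (hC' : IsClubIn (Set.Iio lam.ord) C') :
    ∃ y ∈ C', y ∩ Set.Iio kappa.ord ∈ S ∧ delta y ∈ A := by
  obtain ⟨D, hD, hDspec⟩ := proj_club hκ hkl hC'
  obtain ⟨x, hxS, hxD⟩ := hps A hA hAs D hD
  obtain ⟨h1, h2, h3⟩ := hDspec x hxD
  exact ⟨hull (Set.Iio lam.ord) C' x, h1, h2.symm ▸ hxS.1, h3.symm ▸ hxS.2⟩

end Main

section Main2
variable {kappa lam : Cardinal.{0}}

lemma chain_reflect (hκ : Cardinal.aleph0 < kappa) (hkl : kappa ≤ lam)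
    {S C : Set (Set Ordinal.{0})}
    (hps : ProjStationary (Set.Iio kappa.ord) S)
    (hC : IsClubIn (Set.Iio lam.ord) C)
    {x : Ordinal.{0} → Set Ordinal.{0}}
    (hcp : ∀ α < omega1, x α ∈ countPow (Set.Iio lam.ord))
    (hmono : ∀ α β, α ≤ β → β < omega1 → x α ⊆ x β)
    (hcont : ∀ β < omega1, Order.IsSuccLimit β → x β = ⋃ α ∈ Set.Iio β, x α)
    (hunb : ∀ ξ < omega1, ∃ α < omega1, ξ < delta (x α)) :
    ∃ E, IsClubOmega1 E ∧ ∀ α ∈ E, Order.IsSuccLimit α ∧ x α ∈ spanT kappa lam S C := by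
  classical
  set Yl : Set Ordinal.{0} := Set.Iio lam.ord with hYldef
  have hYl : Set.Iio omega1 ⊆ Yl := hYl hκ hkl
  set dl : Ordinal.{0} → Ordinal.{0} := fun α => delta (x α) with hdl
  have hgood : ∀ α < omega1, GoodSet (x α) := fun α hα => (hcp α hα).2.2
  have hdlt : ∀ α < omega1, dl α < omega1 := fun α hα => (hgood α hα).delta_lt
  have hIio : ∀ α < omega1, x α ∩ Set.Iio omega1 = Set.Iio (dl α) :=
    fun α hα => (hgood α hα).inter_eq
  have hdmono : ∀ α β, α ≤ β → β < omega1 → dl α ≤ dl β := fun α β hab hβ =>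
    delta_mono (hgood α (lt_of_le_of_lt hab hβ)) (hgood β hβ) (hmono α β hab hβ)
  have hcont' : ∀ β < omega1, Order.IsSuccLimit β →
      Set.Iio (dl β) = ⋃ α ∈ Set.Iio β, Set.Iio (dl α) := by
    intro β hβ hlim
    rw [← hIio β hβ, hcont β hβ hlim]
    ext ξ
    simp only [Set.mem_inter_iff, Set.mem_iUnion, Set.mem_Iio, exists_prop]
    constructor
    · rintro ⟨⟨α, hα, hξ⟩, hξ2⟩
      refine ⟨α, hα, ?_⟩
      have : ξ ∈ x α ∩ Set.Iio omega1 := ⟨hξ, hξ2⟩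
      rwa [hIio α (hα.trans hβ)] at this
    · rintro ⟨α, hα, hξ⟩
      have : ξ ∈ x α ∩ Set.Iio omega1 := by rw [hIio α (hα.trans hβ)]; exact hξ
      exact ⟨⟨α, hα, this.1⟩, this.2⟩
  -- the club c₀ of strict increase points
  set c0 : Set Ordinal.{0} := {α | α < omega1 ∧ ∀ β < α, dl β < dl α} with hc0def
  have hc0club : IsClubOmega1 c0 := by
    refine ⟨fun α hα => hα.1, ?_, ?_⟩
    · intro β₀ hβ₀
      set P : Set Ordinal.{0} := {α | α < omega1 ∧ dl β₀ < dl α} with hP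
      have hPne : P.Nonempty := by
        obtain ⟨α, hα1, hα2⟩ := hunb (dl β₀) (hdlt β₀ hβ₀)
        exact ⟨α, hα1, hα2⟩
      set s := sInf P with hs
      have hsP : s ∈ P := csInf_mem hPne
      have hsc0 : s ∈ c0 := by
        refine ⟨hsP.1, fun β hβ => ?_⟩
        have hβnP : β ∉ P := notMem_of_lt_csInf hβ ⟨0, fun a _ => zero_le⟩
        have hβω : β < omega1 := hβ.trans hsP.1
        have : ¬ dl β₀ < dl β := fun hcon => hβnP ⟨hβω, hcon⟩
        exact lt_of_le_of_lt (not_lt.1 this) hsP.2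
      refine ⟨s, hsc0, ?_⟩
      by_contra hcon
      push_neg at hcon
      exact absurd (hdmono s β₀ hcon hβ₀) (not_le.2 hsP.2)
    · intro α hα hα0 hprem
      refine ⟨hα, fun β hβ => ?_⟩
      obtain ⟨γ, hγc0, hβγ, hγα⟩ := hprem β hβ
      exact lt_of_lt_of_le (hγc0.2 β hβγ) (hdmono γ α hγα.le hα)
  -- the club Cl
  set Cl : Set (Set Ordinal.{0}) :=
    {y | y ∈ countPow Yl ∧ ∀ β, β < omega1 → dl β < delta y → x β ⊆ y} with hCldef
  have hClclub : IsClubIn Yl Cl := by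
    refine ⟨fun y hy => hy.1, ?_, ?_⟩
    · intro w₀ hw₀
      set t : Set Ordinal.{0} → Set Ordinal.{0} :=
        fun w => goodify (w ∪ ⋃ β ∈ {β | β < omega1 ∧ dl β < delta w}, x β) with ht
      have hstep : ∀ w, w ∈ countPow Yl →
          t w ∈ countPow Yl ∧ w ⊆ t w ∧ ∀ β, β < omega1 → dl β < delta w → x β ⊆ t w := by
        intro w hw
        have hdw : delta w < omega1 := hw.2.2.delta_lt
        obtain ⟨α₀, hα₀1, hα₀2⟩ := hunb (delta w) hdw
        have hBsub : {β | β < omega1 ∧ dl β < delta w} ⊆ Set.Iio α₀ := by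
          intro β hβ
          by_contra hcon
          simp only [Set.mem_Iio, not_lt] at hcon
          exact absurd (lt_of_le_of_lt (hdmono α₀ β hcon hβ.1) hβ.2) (not_lt.2 hα₀2.le)
        have hBc : {β | β < omega1 ∧ dl β < delta w}.Countable :=
          (countable_Iio_of_lt_omega1 hα₀1).mono hBsub
        have hUc : (w ∪ ⋃ β ∈ {β | β < omega1 ∧ dl β < delta w}, x β).Countable := by
          refine hw.2.1.union ?_
          exact Set.Countable.biUnion hBc (fun β hβ => (hcp β hβ.1).2.1)
        have hUs : (w ∪ ⋃ β ∈ {β | β < omega1 ∧ dl β < delta w}, x β) ⊆ Yl := by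
          refine Set.union_subset hw.1 ?_
          refine Set.iUnion₂_subset fun β hβ => (hcp β hβ.1).1
        refine ⟨⟨goodify_subset hUs hYl hUc, goodify_countable hUc, goodify_good hUc⟩, ?_, ?_⟩
        · exact (Set.subset_union_left).trans (subset_goodify _)
        · intro β hβ1 hβ2
          refine Set.Subset.trans ?_ (subset_goodify _)
          refine Set.Subset.trans ?_ Set.subset_union_right
          exact Set.subset_iUnion₂ (s := fun β _ => x β) β ⟨hβ1, hβ2⟩
      have hicp : ∀ n, t^[n] w₀ ∈ countPow Yl := by
        intro n; induction n with
        | zero => simpa using hw₀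
        | succ n ih => rw [Function.iterate_succ_apply']; exact (hstep _ ih).1
      have hisub : ∀ n, t^[n] w₀ ⊆ t^[n+1] w₀ := fun n => by
        rw [Function.iterate_succ_apply']; exact (hstep _ (hicp n)).2.1
      have himono : ∀ m n, m ≤ n → t^[m] w₀ ⊆ t^[n] w₀ := by
        intro m n hmn
        induction hmn with
        | refl => exact subset_rfl
        | step h ih => exact ih.trans (hisub _)
      set E : Set (Set Ordinal.{0}) := Set.range (fun n => t^[n] w₀) with hE
      set u : Set Ordinal.{0} := ⋃₀ E with hu
      have hucp : u ∈ countPow Yl := countPow_sUnion (by rintro - ⟨n, rfl⟩; exact hicp n)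
        (Set.countable_range _)
      have huIio : Set.Iio (delta u) = ⋃ n : ℕ, Set.Iio (delta (t^[n] w₀)) := by
        rw [← hucp.2.2.inter_eq]
        ext ξ
        simp only [Set.mem_inter_iff, Set.mem_sUnion, Set.mem_iUnion, Set.mem_Iio]
        constructor
        · rintro ⟨⟨-, ⟨n, rfl⟩, hξ⟩, hξ2⟩
          refine ⟨n, ?_⟩
          have : ξ ∈ t^[n] w₀ ∩ Set.Iio omega1 := ⟨hξ, hξ2⟩
          rw [(hicp n).2.2.inter_eq] at this
          exact this
        · rintro ⟨n, hξ⟩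
          have : ξ ∈ t^[n] w₀ ∩ Set.Iio omega1 := by
            rw [(hicp n).2.2.inter_eq]; exact hξ
          exact ⟨⟨_, ⟨n, rfl⟩, this.1⟩, this.2⟩
      refine ⟨u, ⟨hucp, ?_⟩, fun ξ hξ => ⟨w₀, ⟨0, rfl⟩, hξ⟩⟩
      intro β hβ1 hβ2
      have hmem : dl β ∈ Set.Iio (delta u) := hβ2
      rw [huIio] at hmem
      simp only [Set.mem_iUnion, Set.mem_Iio] at hmem
      obtain ⟨n, hn⟩ := hmem
      refine Set.Subset.trans ((hstep _ (hicp n)).2.2 β hβ1 hn) ?_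
      intro ξ hξ
      rw [← Function.iterate_succ_apply' t n w₀] at hξ
      exact ⟨_, ⟨n+1, rfl⟩, hξ⟩
    · -- closed
      intro E hE hEc hEne hEch
      have hucp : ⋃₀ E ∈ countPow Yl := countPow_sUnion (fun z hz => (hE hz).1) hEc
      refine ⟨hucp, ?_⟩
      intro β hβ1 hβ2
      have huIio : Set.Iio (delta (⋃₀ E)) = ⋃ z ∈ E, Set.Iio (delta z) := by
        rw [← hucp.2.2.inter_eq]
        ext ξ
        simp only [Set.mem_inter_iff, Set.mem_sUnion, Set.mem_iUnion, Set.mem_Iio, exists_prop]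
        constructor
        · rintro ⟨⟨z, hz, hξ⟩, hξ2⟩
          refine ⟨z, hz, ?_⟩
          have : ξ ∈ z ∩ Set.Iio omega1 := ⟨hξ, hξ2⟩
          rw [(hE hz).1.2.2.inter_eq] at this
          exact this
        · rintro ⟨z, hz, hξ⟩
          have : ξ ∈ z ∩ Set.Iio omega1 := by rw [(hE hz).1.2.2.inter_eq]; exact hξ
          exact ⟨⟨z, hz, this.1⟩, this.2⟩
      have hmem : dl β ∈ Set.Iio (delta (⋃₀ E)) := hβ2
      rw [huIio] at hmem
      simp only [Set.mem_iUnion, Set.mem_Iio, exists_prop] at hmem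
      obtain ⟨z, hz, hn⟩ := hmem
      exact Set.Subset.trans ((hE hz).2 β hβ1 hn) (fun ξ hξ => ⟨z, hz, hξ⟩)
  -- the bad set is nonstationary
  set A2 : Set Ordinal.{0} :=
    {α | α < omega1 ∧ Order.IsSuccLimit α ∧ (∀ β < α, dl β < dl α) ∧ x α ∉ spanT kappa lam S C}
    with hA2def
  have hnotstat : ¬ IsStatOmega1 A2 := by
    intro hstat
    set A : Set Ordinal.{0} := {ξ | ∃ α, α ∈ A2 ∧ dl α = ξ} with hAdef
    have hA : A ⊆ Set.Iio omega1 := by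
      rintro - ⟨α, hα, rfl⟩
      exact hdlt α hα.1
    have hAstat : IsStatOmega1 A := by
      intro c hc
      set c3 : Set Ordinal.{0} := {α | α < omega1 ∧ Order.IsSuccLimit α ∧ dl α ∈ c} with hc3def
      have hc3club : IsClubOmega1 c3 := by
        refine ⟨fun α hα => hα.1, ?_, ?_⟩
        · -- unbounded
          intro β₀ hβ₀
          choose Fc hFc1 hFc2 using fun ξ => fun h : ξ < omega1 => hc.2.1 ξ h
          choose Fx hFx1 hFx2 using fun ξ => fun h : ξ < omega1 => hunb ξ h
          set G : Ordinal.{0} → Ordinal.{0} := fun α =>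
            if h : α < omega1 then
              (if h2 : Fc (dl α) (hdlt α h) < omega1 then
                max (Fx (Fc (dl α) (hdlt α h)) h2) (α + 1) else α + 1)
            else 0 with hG
          have hGspec : ∀ α (hα : α < omega1), α < G α ∧ G α < omega1 ∧
              Fc (dl α) (hdlt α hα) < dl (G α) := by
            intro α hα
            have hclt : Fc (dl α) (hdlt α hα) < omega1 :=
              hc.1 (hFc1 (dl α) (hdlt α hα))
            have hα1 : α + 1 < omega1 := omega1_isLimit.succ_lt hα
            simp only [hG, dif_pos hα, dif_pos hclt]
            have hFxlt : Fx (Fc (dl α) (hdlt α hα)) hclt < omega1 :=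
              hFx1 _ hclt
            refine ⟨lt_of_lt_of_le (Order.lt_succ α) (le_max_right _ _),
              max_lt hFxlt hα1, ?_⟩
            refine lt_of_lt_of_le (hFx2 _ hclt) ?_
            exact hdmono _ _ (le_max_left _ _) (max_lt hFxlt hα1)
          set s : ℕ → Ordinal.{0} := fun n => G^[n] (β₀ + 1) with hsdef
          have hss : ∀ n, s (n+1) = G (s n) := fun n => Function.iterate_succ_apply' G n _
          have hβ₀1 : β₀ + 1 < omega1 := omega1_isLimit.succ_lt hβ₀
          have hslt : ∀ n, s n < omega1 := by
            intro n; induction n with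
            | zero => exact hβ₀1
            | succ n ih => rw [hss n]; exact (hGspec _ ih).2.1
          have hsmono : ∀ n, s n < s (n+1) := fun n => by
            rw [hss n]; exact (hGspec _ (hslt n)).1
          have hsmono' : ∀ m n, m < n → s m < s n := by
            intro m n hmn
            induction hmn with
            | refl => exact hsmono m
            | step h ih => exact ih.trans (hsmono _)
          have hrlt : ∀ a ∈ Set.range s, a < omega1 := by
            rintro - ⟨n, rfl⟩; exact hslt n
          set σ := sSup (Set.range s) with hσ
          have hσlt : σ < omega1 := sSup_lt_omega1 (Set.countable_range s) hrlt
          have hle : ∀ n, s n ≤ σ := fun n => le_sSup_ord hrlt ⟨n, rfl⟩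
          have hβσ : ∀ β < σ, ∃ n, β < s n := by
            intro β hβ
            obtain ⟨-, ⟨n, rfl⟩, h⟩ := (lt_sSup_ord hrlt ⟨s 0, 0, rfl⟩).1 hβ
            exact ⟨n, h⟩
          have hσlim : Order.IsSuccLimit σ := by
            refine isLim_mk ?_ ?_
            · intro h0
              have := lt_of_lt_of_le (lt_of_le_of_lt (show (0 : Ordinal) ≤ β₀ from zero_le)
                (Order.lt_succ β₀)) (hle 0)
              rw [h0] at this
              exact absurd this (not_lt_of_ge zero_le)
            · intro β hβ
              obtain ⟨n, hn⟩ := hβσ β hβ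
              exact lt_of_le_of_lt (Order.succ_le_of_lt hn)
                (lt_of_lt_of_le (hsmono n) (hle (n+1)))
          have hσβ₀ : β₀ < σ := lt_of_lt_of_le (Order.lt_succ β₀) (hle 0)
          -- dl σ ∈ c
          have hdσc : dl σ ∈ c := by
            have hne0 : dl σ ≠ 0 := by
              intro h0
              have h1 : Fc (dl (s 0)) (hdlt _ (hslt 0)) < dl (s 1) := by
                rw [hss 0]; exact (hGspec _ (hslt 0)).2.2
              have h2 : dl (s 1) ≤ dl σ :=
                hdmono _ _ (hle 1) hσlt
              have : Fc (dl (s 0)) (hdlt _ (hslt 0)) < dl σ := lt_of_lt_of_le h1 h2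
              rw [h0] at this
              exact absurd this (not_lt_of_ge zero_le)
            refine hc.2.2 (dl σ) (hdlt σ hσlt) hne0 ?_
            intro ζ hζ
            have hζ' : ζ ∈ Set.Iio (dl σ) := Set.mem_Iio.2 hζ
            rw [hcont' σ hσlt hσlim] at hζ'
            simp only [Set.mem_iUnion, Set.mem_Iio, exists_prop] at hζ'
            obtain ⟨α, hασ, hζα⟩ := hζ'
            obtain ⟨n, hn⟩ := hβσ α hασ
            have h1 : dl α ≤ dl (s n) := hdmono α (s n) hn.le (hslt n)
            refine ⟨Fc (dl (s n)) (hdlt _ (hslt n)), hFc1 _ _, ?_, ?_⟩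
            · exact lt_of_lt_of_le (lt_of_lt_of_le hζα h1) (hFc2 _ _).le
            · have h2 : Fc (dl (s n)) (hdlt _ (hslt n)) < dl (s (n+1)) := by
                rw [hss n]; exact (hGspec _ (hslt n)).2.2
              exact lt_of_lt_of_le h2 (hdmono _ _ (hle (n+1)) hσlt)
          exact ⟨σ, ⟨hσlt, hσlim, hdσc⟩, hσβ₀⟩
        · -- closed
          intro α hα hα0 hprem
          have hαlim : Order.IsSuccLimit α := by
            refine isLim_mk hα0 fun β hβ => ?_
            obtain ⟨γ, hγ, hβγ, hγα⟩ := hprem β hβ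
            exact lt_of_le_of_lt (Order.succ_le_of_lt hβγ) hγα
          refine ⟨hα, hαlim, ?_⟩
          by_cases hex : ∃ γ, (γ ∈ c3 ∧ γ < α) ∧ dl γ = dl α
          · obtain ⟨γ, ⟨hγ1, -⟩, hγ2⟩ := hex
            rw [← hγ2]
            exact hγ1.2.2
          · push_neg at hex
            have hne0 : dl α ≠ 0 := by
              obtain ⟨γ, hγ, h0γ, hγα⟩ := hprem 0 (pos_iff_ne_zero.2 hα0)
              have h1 : dl γ ≤ dl α := hdmono γ α hγα.le hα
              have h2 : dl γ ≠ dl α := hex γ ⟨hγ, hγα⟩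
              intro h0
              exact h2 (le_antisymm h1 (by rw [h0]; exact zero_le))
            refine hc.2.2 (dl α) (hdlt α hα) hne0 ?_
            intro ζ hζ
            have hζ' : ζ ∈ Set.Iio (dl α) := Set.mem_Iio.2 hζ
            rw [hcont' α hα hαlim] at hζ'
            simp only [Set.mem_iUnion, Set.mem_Iio, exists_prop] at hζ'
            obtain ⟨β, hβα, hζβ⟩ := hζ'
            obtain ⟨γ, hγ, hβγ, hγα⟩ := hprem β hβα
            refine ⟨dl γ, hγ.2.2, ?_, ?_⟩
            · exact lt_of_lt_of_le hζβ (hdmono β γ hβγ.le hγ.1)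
            · exact lt_of_le_of_ne (hdmono γ α hγα.le hα) (hex γ ⟨hγ, hγα⟩)
      obtain ⟨α, hαA2, hαc3⟩ := hstat c3 hc3club
      exact ⟨dl α, ⟨α, hαA2, rfl⟩, hαc3.2.2⟩
    -- now use stat_lift against the club C ∩ Cl
    obtain ⟨y, hyCCl, hyS, hyA⟩ :=
      stat_lift hκ hkl hps hA hAstat (club_inter hYl hC hClclub)
    obtain ⟨α, hαA2, hdly⟩ := hyA
    apply hαA2.2.2.2
    refine ⟨hcp α hαA2.1, y, hyCCl.1, ?_, ?_, hyS⟩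
    · -- x α ⊆ y
      rw [hcont α hαA2.1 hαA2.2.1]
      refine Set.iUnion₂_subset fun β hβ => ?_
      refine hyCCl.2.2 β (hβ.trans hαA2.1) ?_
      rw [← hdly]
      exact hαA2.2.2.1 β hβ
    · exact hdly
  -- extract the club
  rw [IsStatOmega1] at hnotstat
  push_neg at hnotstat
  obtain ⟨c, hc, hcempty⟩ := hnotstat
  set d := c ∩ c0 with hd
  have hdclub : IsClubOmega1 d := clubOmega1_inter hc hc0club
  refine ⟨accPts d, clubOmega1_accPts hdclub, ?_⟩
  intro α hα
  have hαd : α ∈ d := accPts_subset hdclub hα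
  have hαlim : Order.IsSuccLimit α := accPts_isLimit hα
  refine ⟨hαlim, ?_⟩
  by_contra hnot
  have : α ∈ A2 ∩ c := ⟨⟨hαd.2.1, hαlim, hαd.2.2, hnot⟩, hαd.1⟩
  rw [hcempty] at this
  exact this
end Main2

section CStar
variable {kappa lam : Cardinal.{0}}

lemma gbd_mono {z z' : Set Ordinal.{0}} (h : z ⊆ z') : gbd z ≤ gbd z' := by
  rcases Set.eq_empty_or_nonempty ((fun ξ => ξ + 1) '' (z ∩ Set.Iio omega1)) with he | hne
  · rw [gbd, he, csSup_empty]; exact bot_le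
  · refine csSup_le_csSup ?_ hne (Set.image_mono (Set.inter_subset_inter_left _ h))
    refine bddAbove_of_lt_omega1 ?_
    rintro - ⟨ξ, ⟨-, hξ⟩, rfl⟩
    exact omega1_isLimit.succ_lt hξ

lemma goodify_mono {z z' : Set Ordinal.{0}} (h : z ⊆ z') : goodify z ⊆ goodify z' :=
  Set.union_subset_union h (fun ξ hξ => lt_of_lt_of_le hξ (gbd_mono h))

lemma mk_Iio_omega1 : #(↥(Set.Iio omega1)) = Cardinal.aleph 1 := by
  rw [Ordinal.mk_Iio_ordinal, omega1, Cardinal.card_ord, Cardinal.lift_aleph]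
  simp

/-- From a filtration we get a club of `[X]^ω` inside `spanT`. -/
lemma filt_club (hκ : Cardinal.aleph0 < kappa) (hkl : kappa ≤ lam)
    {S C : Set (Set Ordinal.{0})}
    (hps : ProjStationary (Set.Iio kappa.ord) S)
    (hC : IsClubIn (Set.Iio lam.ord) C)
    {X : Set Ordinal.{0}} {x : Ordinal.{0} → Set Ordinal.{0}}
    (hf : IsFilt lam X x) (hX : Set.Iio omega1 ⊆ X) :
    ∃ D, IsClubIn X D ∧ D ⊆ spanT kappa lam S C := by
  classical
  obtain ⟨hcp, hmono, hcont, hXeq⟩ := hf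
  have hsubX : ∀ α < omega1, x α ⊆ X := by
    intro α hα ζ hζ
    rw [hXeq]
    exact Set.mem_biUnion hα hζ
  have hunb : ∀ ξ < omega1, ∃ α < omega1, ξ < delta (x α) := by
    intro ξ hξ
    have : (ξ : Ordinal) ∈ X := hX hξ
    rw [hXeq] at this
    simp only [Set.mem_iUnion, Set.mem_Iio, exists_prop] at this
    obtain ⟨α, hα, hξα⟩ := this
    refine ⟨α, hα, ?_⟩
    have : ξ ∈ x α ∩ Set.Iio omega1 := ⟨hξα, hξ⟩
    rw [(hcp α hα).2.2.inter_eq] at this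
    exact this
  obtain ⟨E, hE, hEspec⟩ := chain_reflect hκ hkl hps hC hcp
    (fun α β hab hβ => hmono α β hab hβ) hcont hunb
  have hEω : ∀ α ∈ E, α < omega1 := fun α hα => hE.1 hα
  refine ⟨x '' E, ⟨?_, ?_, ?_⟩, ?_⟩
  · -- subset of countPow X
    rintro - ⟨α, hα, rfl⟩
    have h1 := hcp α (hEω α hα)
    exact ⟨hsubX α (hEω α hα), h1.2.1, h1.2.2⟩
  · -- cofinal
    intro w hw
    have hmem : ∀ ζ ∈ w, ∃ α, α < omega1 ∧ ζ ∈ x α := by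
      intro ζ hζ
      have : ζ ∈ X := hw.1 hζ
      rw [hXeq] at this
      simpa using this
    choose g hg1 hg2 using hmem
    set I : Set Ordinal.{0} := (fun p : {ζ // ζ ∈ w} => g p.1 p.2 + 1) '' Set.univ with hI
    have hIlt : ∀ a ∈ I, a < omega1 := by
      rintro - ⟨⟨ζ, hζ⟩, -, rfl⟩
      exact omega1_isLimit.succ_lt (hg1 ζ hζ)
    have hIc : I.Countable := by
      refine Set.Countable.image ?_ _
      exact Set.countable_univ_iff.2 hw.2.1.to_subtype
    have hslt : sSup I < omega1 := sSup_lt_omega1 hIc hIlt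
    obtain ⟨α, hαE, hsα⟩ := hE.2.1 (sSup I) hslt
    refine ⟨x α, ⟨α, hαE, rfl⟩, ?_⟩
    intro ζ hζ
    have h1 : g ζ hζ + 1 ≤ sSup I := le_sSup_ord hIlt ⟨⟨ζ, hζ⟩, Set.mem_univ _, rfl⟩
    have h2 : g ζ hζ ≤ α := le_of_lt (lt_of_lt_of_le (lt_of_lt_of_le (lt_add_one_ord _) h1) hsα.le)
    exact hmono _ α h2 (hEω α hαE) (hg2 ζ hζ)
  · -- closed under chains
    intro D' hD' hD'c hD'ne hD'ch
    have hch : ∀ z ∈ D', ∃ α, α ∈ E ∧ x α = z := by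
      intro z hz
      obtain ⟨α, hα, rfl⟩ := hD' hz
      exact ⟨α, hα, rfl⟩
    choose gg hgg1 hgg2 using hch
    set I : Set Ordinal.{0} := Set.range (fun p : {z // z ∈ D'} => gg p.1 p.2) with hI
    have hIE : I ⊆ E := by rintro - ⟨⟨z, hz⟩, rfl⟩; exact hgg1 z hz
    have hIlt : ∀ a ∈ I, a < omega1 := fun a ha => hEω a (hIE ha)
    have hIc : I.Countable := by
      haveI := hD'c.to_subtype
      exact Set.countable_range _
    have hIne : I.Nonempty := by
      obtain ⟨z, hz⟩ := hD'ne
      exact ⟨gg z hz, ⟨z, hz⟩, rfl⟩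
    set σ := sSup I with hσ
    have hσlt : σ < omega1 := sSup_lt_omega1 hIc hIlt
    have hub : ∀ z ∈ D', z ⊆ x σ := by
      intro z hz
      rw [← hgg2 z hz]
      exact hmono _ σ (le_sSup_ord hIlt ⟨⟨z, hz⟩, rfl⟩) hσlt
    by_cases hσI : σ ∈ I
    · have hσE : σ ∈ E := hIE hσI
      have : ⋃₀ D' = x σ := by
        apply Set.Subset.antisymm (Set.sUnion_subset hub)
        obtain ⟨⟨z, hz⟩, hzeq⟩ := hσI
        have hzeq' : gg z hz = σ := hzeq
        intro ξ hξ
        exact ⟨z, hz, by rw [← hgg2 z hz, hzeq']; exact hξ⟩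
      rw [this]
      exact ⟨σ, hσE, rfl⟩
    · have hσE : σ ∈ E := by
        refine hE.2.2 σ hσlt ?_ ?_
        · intro h0
          obtain ⟨a, ha⟩ := hIne
          have : a = 0 := le_antisymm (by rw [← h0]; exact le_sSup_ord hIlt ha)
            (show (0 : Ordinal) ≤ a from zero_le)
          exact hσI (by rw [h0, ← this]; exact ha)
        · intro β hβ
          obtain ⟨a, haI, hβa⟩ := (lt_sSup_ord hIlt hIne).1 hβ
          refine ⟨a, hIE haI, hβa, ?_⟩
          exact lt_of_le_of_ne (le_sSup_ord hIlt haI) (fun h => hσI (h ▸ haI))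
      have hσlim : Order.IsSuccLimit σ := (hEspec σ hσE).1
      have : ⋃₀ D' = x σ := by
        apply Set.Subset.antisymm (Set.sUnion_subset hub)
        rw [hcont σ hσlt hσlim]
        refine Set.iUnion₂_subset fun β hβ => ?_
        obtain ⟨a, haI, hβa⟩ := (lt_sSup_ord hIlt hIne).1 hβ
        have halt : a < omega1 := hIlt _ haI
        obtain ⟨⟨z, hz⟩, haeq⟩ := haI
        have haeq' : gg z hz = a := haeq
        refine Set.Subset.trans (hmono β a hβa.le halt) ?_
        intro ξ hξ
        exact ⟨z, hz, by rw [← hgg2 z hz, haeq']; exact hξ⟩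
      rw [this]
      exact ⟨σ, hσE, rfl⟩
  · rintro - ⟨α, hα, rfl⟩
    exact (hEspec α hα).2

/-- cofinality of the `C*` club. -/
lemma cstar_cofinal (hκ : Cardinal.aleph0 < kappa) (hkl : kappa ≤ lam)
    {X₀ : Set Ordinal.{0}} (hX₀ : X₀ ∈ aleph1Pow (Set.Iio lam.ord)) :
    ∃ X, (Set.Iio omega1 ⊆ X ∧ X ∈ aleph1Pow (Set.Iio lam.ord) ∧
      ∃ x, IsFilt lam X x) ∧ X₀ ⊆ X := by
  classical
  set X : Set Ordinal.{0} := X₀ ∪ Set.Iio omega1 with hXdef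
  have hXsub : X ⊆ Set.Iio lam.ord := Set.union_subset hX₀.1 (hYl hκ hkl)
  have hXIio : Set.Iio omega1 ⊆ X := Set.subset_union_right
  have hmkX : #(↥X) = Cardinal.aleph 1 := by
    apply le_antisymm
    · refine le_trans (Cardinal.mk_union_le _ _) ?_
      rw [hX₀.2, mk_Iio_omega1]
      exact (Cardinal.add_eq_self (Cardinal.aleph0_le_aleph 1)).le
    · rw [← mk_Iio_omega1]
      exact Cardinal.mk_le_mk_of_subset hXIio
  have hequiv : Nonempty (↥(Set.Iio omega1) ≃ ↥X) := by
    rw [← Cardinal.eq, mk_Iio_omega1, hmkX]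
  obtain ⟨e⟩ := hequiv
  set ee : Ordinal.{0} → Ordinal.{0} := fun i =>
    if h : i < omega1 then (e ⟨i, h⟩ : Ordinal.{0}) else 0 with hee
  have heeX : ∀ i < omega1, ee i ∈ X := by
    intro i hi
    simp only [hee, dif_pos hi]
    exact (e ⟨i, hi⟩).2
  set img : Ordinal.{0} → Set Ordinal.{0} := fun α => ee '' (Set.Iio α ∩ Set.Iio omega1)
    with himg
  have himgmono : ∀ α β, α ≤ β → img α ⊆ img β :=
    fun α β h => Set.image_mono (Set.inter_subset_inter_left _ (Set.Iio_subset_Iio h))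
  have himgX : ∀ α, img α ⊆ X := by
    rintro α - ⟨i, ⟨-, hi⟩, rfl⟩
    exact heeX i hi
  have himgc : ∀ α < omega1, (img α).Countable := by
    intro α hα
    exact Set.Countable.image ((countable_Iio_of_lt_omega1 hα).mono Set.inter_subset_left) _
  set x : Ordinal.{0} → Set Ordinal.{0} := fun α => goodify (img α) with hx
  have hxcp : ∀ α < omega1, x α ∈ countPow (Set.Iio lam.ord) := by
    intro α hα
    exact ⟨goodify_subset ((himgX α).trans hXsub) (hYl hκ hkl) (himgc α hα),
      goodify_countable (himgc α hα), goodify_good (himgc α hα)⟩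
  have hxmono : ∀ α β, α ≤ β → β < omega1 → x α ⊆ x β :=
    fun α β h _ => goodify_mono (himgmono α β h)
  have hxcont : ∀ β < omega1, Order.IsSuccLimit β → x β = ⋃ α ∈ Set.Iio β, x α := by
    intro β hβ hlim
    apply Set.Subset.antisymm
    · rintro ξ (hξ | hξ)
      · -- in img β
        obtain ⟨i, ⟨hiβ, hiω⟩, rfl⟩ := hξ
        have hsi : (i+1 : Ordinal) < β := hlim.succ_lt hiβ
        refine Set.mem_biUnion hsi ?_
        exact subset_goodify _ ⟨i, ⟨lt_add_one_ord i, hiω⟩, rfl⟩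
      · -- below gbd (img β)
        have hne : ((fun ξ => ξ + 1) '' (img β ∩ Set.Iio omega1)).Nonempty ∨
            ((fun ξ => ξ + 1) '' (img β ∩ Set.Iio omega1)) = ∅ := by
          rcases Set.eq_empty_or_nonempty ((fun ξ => ξ + 1) '' (img β ∩ Set.Iio omega1)) with h | h
          · exact Or.inr h
          · exact Or.inl h
        rcases hne with hne | hne
        · have hlt := (lt_sSup_ord (s := (fun ξ => ξ + 1) '' (img β ∩ Set.Iio omega1))
            (by rintro - ⟨η, ⟨-, hη⟩, rfl⟩; exact omega1_isLimit.succ_lt hη) hne).1 hξ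
          obtain ⟨-, ⟨η, ⟨⟨i, ⟨hiβ, hiω⟩, rfl⟩, hηω⟩, rfl⟩, hξη⟩ := hlt
          have hsi : (i+1 : Ordinal) < β := hlim.succ_lt hiβ
          refine Set.mem_biUnion hsi ?_
          refine Set.mem_union_right _ ?_
          have h1 : ee i ∈ img (i+1) := ⟨i, ⟨lt_add_one_ord i, hiω⟩, rfl⟩
          have h2 : ee i + 1 ≤ gbd (img (i+1)) := by
            refine le_sSup_ord ?_ ⟨ee i, ⟨h1, hηω⟩, rfl⟩
            rintro - ⟨η', ⟨-, hη'⟩, rfl⟩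
            exact omega1_isLimit.succ_lt hη'
          exact lt_of_lt_of_le hξη h2
        · rw [gbd, hne] at hξ
          have : sSup (∅ : Set Ordinal.{0}) = 0 := by simp [csSup_empty]
          rw [this] at hξ
          exact absurd hξ (not_lt_of_ge (show (0 : Ordinal) ≤ ξ from zero_le))
    · refine Set.iUnion₂_subset fun α hα => ?_
      exact hxmono α β hα.le hβ
  have hXeq : X = ⋃ α ∈ Set.Iio omega1, x α := by
    apply Set.Subset.antisymm
    · intro ζ hζ
      set i := e.symm ⟨ζ, hζ⟩ with hi
      have hiω : (i : Ordinal) < omega1 := i.2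
      have heei : ee i = ζ := by
        simp only [hee, dif_pos hiω]
        have : (⟨(i : Ordinal), hiω⟩ : ↥(Set.Iio omega1)) = i := Subtype.ext rfl
        rw [this, hi, Equiv.apply_symm_apply]
      have hsi : (i : Ordinal) + 1 < omega1 := omega1_isLimit.succ_lt hiω
      refine Set.mem_biUnion hsi ?_
      refine subset_goodify _ ?_
      exact ⟨i, ⟨lt_add_one_ord _, hiω⟩, heei⟩
    · refine Set.iUnion₂_subset fun α hα => ?_
      refine goodify_subset (himgX α) hXIio (himgc α hα)
  exact ⟨X, ⟨hXIio, ⟨hXsub, hmkX⟩, ⟨x, hxcp, hxmono, hxcont, hXeq⟩⟩, Set.subset_union_left⟩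

/-- closure of the `C*` club under `ω₁`-chains. -/
lemma cstar_union (hκ : Cardinal.aleph0 < kappa) (hkl : kappa ≤ lam)
    {f : Ordinal.{0} → Set Ordinal.{0}}
    (hfmono : ∀ α β, α < β → β < omega1 → f α ⊆ f β)
    (hfC : ∀ i < omega1, Set.Iio omega1 ⊆ f i ∧ f i ∈ aleph1Pow (Set.Iio lam.ord) ∧
      ∃ x, IsFilt lam (f i) x) :
    Set.Iio omega1 ⊆ (⋃ α ∈ Set.Iio omega1, f α) ∧
      (⋃ α ∈ Set.Iio omega1, f α) ∈ aleph1Pow (Set.Iio lam.ord) ∧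
      ∃ z, IsFilt lam (⋃ α ∈ Set.Iio omega1, f α) z := by
  classical
  have hfmono' : ∀ α β, α ≤ β → β < omega1 → f α ⊆ f β := by
    intro α β h hβ
    rcases eq_or_lt_of_le h with rfl | h
    · exact subset_rfl
    · exact hfmono α β h hβ
  set X : Set Ordinal.{0} := ⋃ α ∈ Set.Iio omega1, f α with hXdef
  have hXIio : Set.Iio omega1 ⊆ X := by
    refine Set.Subset.trans ((hfC 0 omega1_pos).1) ?_
    exact fun ξ hξ => Set.mem_biUnion omega1_pos hξ
  have hXsub : X ⊆ Set.Iio lam.ord :=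
    Set.iUnion₂_subset fun α hα => ((hfC α hα).2.1).1
  have hXcard : #(↥X) = Cardinal.aleph 1 := by
    apply le_antisymm
    · rw [hXdef, Set.biUnion_eq_iUnion]
      refine le_trans (Cardinal.mk_iUnion_le _) ?_
      have h1 : #(↥(Set.Iio omega1)) = Cardinal.aleph 1 := mk_Iio_omega1
      have h2 : ⨆ i : ↥(Set.Iio omega1), #(↥(f i.1)) ≤ Cardinal.aleph 1 := by
        refine ciSup_le' fun i => ?_
        rw [((hfC i.1 i.2).2.1).2]
      rw [h1]
      refine le_trans (mul_le_mul_right h2 _) ?_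
      rw [Cardinal.mul_eq_self (Cardinal.aleph0_le_aleph 1)]
    · rw [← mk_Iio_omega1]
      exact Cardinal.mk_le_mk_of_subset hXIio
  -- choose filtrations
  have hxx : ∀ i, ∃ xx : Ordinal.{0} → Set Ordinal.{0}, i < omega1 → IsFilt lam (f i) xx := by
    intro i
    by_cases h : i < omega1
    · obtain ⟨xx, hxx⟩ := (hfC i h).2.2
      exact ⟨xx, fun _ => hxx⟩
    · exact ⟨fun _ => ∅, fun hcon => absurd hcon h⟩
  choose XX hXX using hxx
  set z : Ordinal.{0} → Set Ordinal.{0} := fun α => ⋃ i ∈ Set.Iio α, XX i α with hz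
  have hzcp : ∀ α < omega1, z α ∈ countPow (Set.Iio lam.ord) := by
    intro α hα
    have : z α = ⋃₀ ((fun i => XX i α) '' (Set.Iio α)) := by
      rw [Set.sUnion_image]
    rw [this]
    refine countPow_sUnion ?_ (Set.Countable.image (countable_Iio_of_lt_omega1 hα) _)
    rintro - ⟨i, hi, rfl⟩
    exact (hXX i (hi.trans hα)).1 α hα
  have hzmono : ∀ α β, α ≤ β → β < omega1 → z α ⊆ z β := by
    intro α β h hβ
    refine Set.iUnion₂_subset fun i hi => ?_
    have hiα : i < α := hi
    have hiβ2 : i < β := lt_of_lt_of_le hiα h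
    refine Set.Subset.trans ((hXX i (hiβ2.trans hβ)).2.1 α β h hβ) ?_
    exact Set.subset_iUnion₂ (s := fun i _ => XX i β) i hiβ2
  have hzcont : ∀ β < omega1, Order.IsSuccLimit β → z β = ⋃ α ∈ Set.Iio β, z α := by
    intro β hβ hlim
    apply Set.Subset.antisymm
    · refine Set.iUnion₂_subset fun i hi => ?_
      have hiω : i < omega1 := hi.trans hβ
      have hcont := (hXX i hiω).2.2.1 β hβ hlim
      rw [hcont]
      refine Set.iUnion₂_subset fun α hα => ?_
      set γ : Ordinal.{0} := max (i+1) (α+1) with hγ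
      have hγβ : γ < β := max_lt (hlim.succ_lt hi) (hlim.succ_lt hα)
      have hγω : γ < omega1 := hγβ.trans hβ
      refine Set.Subset.trans ((hXX i hiω).2.1 α γ
        (le_trans (lt_add_one_ord α).le (le_max_right _ _)) hγω) ?_
      have hiγ : i < γ := by
        rw [hγ]
        exact lt_of_lt_of_le (lt_add_one_ord i) (le_max_left _ _)
      refine Set.Subset.trans (Set.subset_iUnion₂ (s := fun i _ => XX i γ) i hiγ) ?_
      exact fun ξ hξ => Set.mem_biUnion hγβ hξ
    · refine Set.iUnion₂_subset fun α hα => ?_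
      exact hzmono α β hα.le hβ
  have hXeq : X = ⋃ α ∈ Set.Iio omega1, z α := by
    apply Set.Subset.antisymm
    · refine Set.iUnion₂_subset fun i hi => ?_
      intro ξ hξ
      have := (hXX i hi).2.2.2
      rw [this] at hξ
      simp only [Set.mem_iUnion, Set.mem_Iio, exists_prop] at hξ
      obtain ⟨β, hβ, hξβ⟩ := hξ
      set γ : Ordinal.{0} := max (i+1) (β+1) with hγ
      have hγω : γ < omega1 :=
        max_lt (omega1_isLimit.succ_lt hi) (omega1_isLimit.succ_lt hβ)
      have h1 : ξ ∈ XX i γ :=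
        (hXX i hi).2.1 β γ (le_trans (lt_add_one_ord β).le (le_max_right _ _)) hγω hξβ
      have hiγ : i < γ := by
        rw [hγ]
        exact lt_of_lt_of_le (lt_add_one_ord i) (le_max_left _ _)
      have h2 : ξ ∈ z γ := Set.mem_biUnion hiγ h1
      exact Set.mem_biUnion hγω h2
    · refine Set.iUnion₂_subset fun α hα => ?_
      refine Set.iUnion₂_subset fun i hi => ?_
      intro ξ hξ
      have hiω : i < omega1 := hi.trans hα
      have hXi : XX i α ⊆ f i := by
        rw [(hXX i hiω).2.2.2]
        exact Set.subset_iUnion₂ (s := fun β _ => XX i β) α hα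
      exact Set.mem_biUnion hiω (hXi hξ)
  exact ⟨hXIio, ⟨hXsub, hXcard⟩, ⟨z, hzcp, hzmono, hzcont, hXeq⟩⟩

end CStar


/-- if every local club in `[λ]^ω` contains a club, for all cardinals
`λ ≥ κ`, then every projective stationary `S ⊆ [κ]^ω` is spanning. -/
theorem wrp_implies_projectiveStationary_spanning (κ : Cardinal)
    (hκ : Cardinal.aleph0 < κ)
    (hwrp : ∀ lam : Cardinal, κ ≤ lam → ∀ T : Set (Set Ordinal.{0}),
      T ⊆ countPow (Set.Iio lam.ord) → IsLocalClub (Set.Iio lam.ord) T →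
        ∃ C, IsClubIn (Set.Iio lam.ord) C ∧ C ⊆ T)
    (S : Set (Set Ordinal.{0})) (hS : S ⊆ countPow (Set.Iio κ.ord))
    (hps : ProjStationary (Set.Iio κ.ord) S) :
    IsSpanning κ S := by
  intro lam hlam C hC
  have hTsub : spanT κ lam S C ⊆ countPow (Set.Iio lam.ord) := fun z hz => hz.1
  have hTlc : IsLocalClub (Set.Iio lam.ord) (spanT κ lam S C) := by
    refine ⟨{X | Set.Iio omega1 ⊆ X ∧ X ∈ aleph1Pow (Set.Iio lam.ord) ∧ ∃ x, IsFilt lam X x},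
      ⟨fun X hX => hX.2.1, ?_, ?_⟩, ?_⟩
    · intro X₀ hX₀
      obtain ⟨X, hX, hsub⟩ := cstar_cofinal hκ hlam hX₀
      exact ⟨X, hX, hsub⟩
    · intro f hf hfC
      exact cstar_union hκ hlam hf hfC
    · intro X hX
      obtain ⟨x, hx⟩ := hX.2.2
      exact filt_club hκ hlam hps hC hx hX.1
  obtain ⟨D, hD, hDT⟩ := hwrp lam hlam (spanT κ lam S C) hTsub hTlc
  exact ⟨D, hD, fun z hz => (hDT hz).2⟩
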